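/- arXiv:2201.12272 — 3 statements merged into one kernel-verified Lean document; each statement's English description precedes it below -/
import Mathlib

section
/- Let (Ω, π) be a probability space and let W : Ω² → ℝ be a bounded measurable symmetric function. Then sup over measurable A, B ⊆ Ω of |∫_{A×B} W dπ²| is at most 2 · sup over measurable A ⊆ Ω of |∫_{A×A} W dπ²|. -/
/-!
Write `F S T = ∫_{S × T} W`. By symmetry of `W`, `F` is a symmetric set function, additive in
each argument, so the polarization identity
`2 F(A, B) = F(A ∪ B, A ∪ B) + F(A ∩ B, A ∩ B) - F(A \ B, A \ B) - F(B \ A, B \ A)`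
bounds `|F(A, B)|` by twice the supremum of `|F(C, C)|`.
-/

open MeasureTheory

section SymmetricBiadditive

variable {α : Type*} [MeasurableSpace α] {F : Set α → Set α → ℝ}

lemma apply_union_union_of_disjoint
    (hadd : ∀ S T U, MeasurableSet S → MeasurableSet T → MeasurableSet U → Disjoint S T →
      F (S ∪ T) U = F S U + F T U)
    (hsymm : ∀ S T, F S T = F T S) {S T : Set α} (hS : MeasurableSet S)
    (hT : MeasurableSet T) (hST : Disjoint S T) :
    F (S ∪ T) (S ∪ T) = F S S + 2 * F S T + F T T := by
  rw [hadd S T _ hS hT (hS.union hT) hST, hsymm S (S ∪ T), hsymm T (S ∪ T),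
    hadd S T S hS hT hS hST, hadd S T T hS hT hT hST, hsymm T S]
  ring

lemma two_mul_apply_eq_polarization
    (hadd : ∀ S T U, MeasurableSet S → MeasurableSet T → MeasurableSet U → Disjoint S T →
      F (S ∪ T) U = F S U + F T U)
    (hsymm : ∀ S T, F S T = F T S) {A B : Set α} (hA : MeasurableSet A)
    (hB : MeasurableSet B) :
    2 * F A B = F (A ∪ B) (A ∪ B) + F (A ∩ B) (A ∩ B) - F (A \ B) (A \ B) -
      F (B \ A) (B \ A) := by
  have hAB : A \ B ∪ A ∩ B = A := Set.sdiff_union_inter A B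
  have hBA : B \ A ∪ A ∩ B = B := by rw [Set.inter_comm]; exact Set.sdiff_union_inter B A
  have hPR : Disjoint (A \ B) (A ∩ B) := Set.disjoint_sdiff_left.mono_right Set.inter_subset_right
  have hQR : Disjoint (B \ A) (A ∩ B) := Set.disjoint_sdiff_left.mono_right Set.inter_subset_left
  have hunion : F (A ∪ B) (A ∪ B) = F A A + 2 * F A (B \ A) + F (B \ A) (B \ A) := by
    rw [← Set.union_sdiff_self]
    exact apply_union_union_of_disjoint hadd hsymm hA (hB.diff hA) Set.disjoint_sdiff_right
  have hdiag : F A A = F (A \ B) (A \ B) + 2 * F (A \ B) (A ∩ B) + F (A ∩ B) (A ∩ B) := by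
    conv_lhs => rw [← hAB]
    exact apply_union_union_of_disjoint hadd hsymm (hA.diff hB) (hA.inter hB) hPR
  have hright : F A B = F A (B \ A) + F A (A ∩ B) := by
    rw [hsymm A, hsymm A, hsymm A, ← hadd _ _ _ (hB.diff hA) (hA.inter hB) hA hQR, hBA]
  have hinter : F A (A ∩ B) = F (A \ B) (A ∩ B) + F (A ∩ B) (A ∩ B) := by
    simpa only [hAB] using hadd _ _ _ (hA.diff hB) (hA.inter hB) (hA.inter hB) hPR
  linarith

lemma abs_apply_le_two_mul_of_abs_apply_self_le
    (hadd : ∀ S T U, MeasurableSet S → MeasurableSet T → MeasurableSet U → Disjoint S T →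
      F (S ∪ T) U = F S U + F T U)
    (hsymm : ∀ S T, F S T = F T S) {s : ℝ} (hs : ∀ C, MeasurableSet C → |F C C| ≤ s)
    {A B : Set α} (hA : MeasurableSet A) (hB : MeasurableSet B) :
    |F A B| ≤ 2 * s := by
  have h := two_mul_apply_eq_polarization hadd hsymm hA hB
  have hU := abs_le.mp (hs _ (hA.union hB))
  have hR := abs_le.mp (hs _ (hA.inter hB))
  have hP := abs_le.mp (hs _ (hA.diff hB))
  have hQ := abs_le.mp (hs _ (hB.diff hA))
  rw [abs_le]
  constructor <;> linarith [hU.1, hU.2, hR.1, hR.2, hP.1, hP.2, hQ.1, hQ.2]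

end SymmetricBiadditive

section SetIntegralProd

variable {α β E : Type*} [MeasurableSpace α] [MeasurableSpace β] [NormedAddCommGroup E]
  [NormedSpace ℝ E] {μ : Measure α} {ν : Measure β}

lemma setIntegral_union_prod {f : α × β → E} (hf : Integrable f (μ.prod ν)) {S T : Set α}
    {U : Set β} (hT : MeasurableSet T) (hU : MeasurableSet U) (hST : Disjoint S T) :
    ∫ p in (S ∪ T) ×ˢ U, f p ∂μ.prod ν =
      ∫ p in S ×ˢ U, f p ∂μ.prod ν + ∫ p in T ×ˢ U, f p ∂μ.prod ν := by
  rw [Set.union_prod]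
  exact setIntegral_union (Set.Disjoint.set_prod_left hST U U) (hT.prod hU) hf.integrableOn hf.integrableOn

lemma setIntegral_prod_comm_of_ae_eq_swap [SFinite μ] {f : α × α → E}
    (hf : ∀ᵐ p ∂μ.prod μ, f p = f p.swap) (S T : Set α) :
    ∫ p in S ×ˢ T, f p ∂μ.prod μ = ∫ p in T ×ˢ S, f p ∂μ.prod μ := by
  rw [← setIntegral_prod_swap S T f]
  exact integral_congr_ae (ae_restrict_of_ae (hf.mono fun _ hp => hp.symm))

end SetIntegralProd

lemma abs_setIntegral_le_integral_abs {α : Type*} [MeasurableSpace α] {μ : Measure α}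
    {f : α → ℝ} (hf : Integrable f μ) (s : Set α) :
    |∫ x in s, f x ∂μ| ≤ ∫ x, |f x| ∂μ :=
  abs_integral_le_integral_abs.trans
    (setIntegral_le_integral hf.abs (Filter.Eventually.of_forall fun _ => abs_nonneg _))

/-- The cut norm of a bounded symmetric kernel is at most twice the supremum
of the absolute values of integrals over squares `A × A`. -/
theorem cutNorm_le_two_mul_sup_square {Ω : Type*} [MeasurableSpace Ω]
    (μ : Measure Ω) [IsProbabilityMeasure μ] (W : Ω × Ω → ℝ)
    (hWmeas : Measurable W) (hWbdd : ∃ M : ℝ, ∀ p, |W p| ≤ M)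
    (hWsym : ∀ᵐ p ∂(μ.prod μ), W p = W p.swap) :
    sSup {r : ℝ | ∃ A B : Set Ω, MeasurableSet A ∧ MeasurableSet B ∧
        r = |∫ p in A ×ˢ B, W p ∂(μ.prod μ)|} ≤
      2 * sSup {r : ℝ | ∃ A : Set Ω, MeasurableSet A ∧
        r = |∫ p in A ×ˢ A, W p ∂(μ.prod μ)|} := by
  obtain ⟨M, hM⟩ := hWbdd
  have hint : Integrable W (μ.prod μ) :=
    .of_bound hWmeas.aestronglyMeasurable M (.of_forall hM)
  set squares := {r : ℝ | ∃ A : Set Ω, MeasurableSet A ∧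
    r = |∫ p in A ×ˢ A, W p ∂(μ.prod μ)|}
  have hbdd : BddAbove squares := by
    refine ⟨∫ p, |W p| ∂μ.prod μ, ?_⟩
    rintro r ⟨A, -, rfl⟩
    exact abs_setIntegral_le_integral_abs hint _
  have hsq : ∀ C, MeasurableSet C → |∫ p in C ×ˢ C, W p ∂μ.prod μ| ≤ sSup squares :=
    fun C hC => le_csSup hbdd ⟨C, hC, rfl⟩
  refine Real.sSup_le ?_ ?_
  · rintro r ⟨A, B, hA, hB, rfl⟩
    exact abs_apply_le_two_mul_of_abs_apply_self_le
      (fun _ _ _ _ hT hU hST => setIntegral_union_prod hint hT hU hST)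
      (setIntegral_prod_comm_of_ae_eq_swap hWsym) hsq hA hB
  · simpa using (abs_nonneg _).trans (hsq ∅ .empty)
end

section
/- The space of graphons Gra = {W ∈ L^∞(Ω²) : W symmetric, 0 ≤ W ≤ 1 a.e.} equipped with the cut norm distance d_□(U,W) = sup_{A,B ⊆ Ω} |∫_{A×B}(U−W) dπ²| is a complete metric space. -/
open MeasureTheory Filter

/-- The cut norm distance between two kernels. -/
noncomputable def cutDist {Ω : Type*} [MeasurableSpace Ω] (μ : Measure Ω)
    (U W : Ω × Ω → ℝ) : ℝ :=
  sSup {r : ℝ | ∃ A B : Set Ω, MeasurableSet A ∧ MeasurableSet B ∧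
    r = |∫ p in A ×ˢ B, (U p - W p) ∂(μ.prod μ)|}

/-- A graphon: a measurable, a.e. symmetric kernel with values in [0,1] a.e. -/
def IsGraphon {Ω : Type*} [MeasurableSpace Ω] (μ : Measure Ω) (W : Ω × Ω → ℝ) : Prop :=
  Measurable W ∧ (∀ᵐ p ∂(μ.prod μ), W p ∈ Set.Icc (0:ℝ) 1) ∧
    (∀ᵐ p ∂(μ.prod μ), W p = W p.swap)

/-!
Graphons lie in the unit ball of `L²(Ω²)`, so by Banach–Alaoglu the sequence has a weak cluster
point `U` (a cluster point rather than a limit of a subsequence, so no separability is needed).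
Testing against indicators, `∫_S U` is a cluster point of `∫_S Wₙ` for every measurable
`S ⊆ Ω²`; this makes `U` a graphon, and on rectangles, where `∫_{A×B} Wₙ` converges because the
sequence is cut-Cauchy, it identifies `∫_{A×B} U` as the limit. The Cauchy bound then passes to
the limit uniformly in the rectangle.
-/

open Topology
open scoped ENNReal RealInnerProductSpace

theorem MapClusterPt.eq_of_tendsto {X ι : Type*} [TopologicalSpace X] [T2Space X] {x y : X}
    {F : Filter ι} {u : ι → X} (hx : MapClusterPt x F u) (hy : Tendsto u F (𝓝 y)) : x = y := by
  by_contra hne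
  exact clusterPt_iff_not_disjoint.mp (ClusterPt.mono hx hy) (disjoint_nhds_nhds.mpr hne)

theorem exists_forall_mapClusterPt_inner {H : Type*} [NormedAddCommGroup H]
    [InnerProductSpace ℝ H] [CompleteSpace H] {f : ℕ → H} {C : ℝ} (hf : ∀ n, ‖f n‖ ≤ C) :
    ∃ u : H, ∀ g : H, MapClusterPt ⟪g, u⟫ atTop (fun n => ⟪g, f n⟫) := by
  let φ : ℕ → WeakDual ℝ H := fun n =>
    WeakDual.toStrongDual.symm (InnerProductSpace.toDual ℝ H (f n))
  obtain ⟨x, -, hx⟩ := (WeakDual.isCompact_closedBall (𝕜 := ℝ) (E := H) 0 C).exists_mapClusterPt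
    (f := atTop) (u := φ) (by simp [φ, hf])
  refine ⟨(InnerProductSpace.toDual ℝ H).symm (WeakDual.toStrongDual x), fun g => ?_⟩
  have hφ : (fun y : WeakDual ℝ H => y g) ∘ φ = fun n => ⟪g, f n⟫ :=
    funext fun n => real_inner_comm g (f n)
  have hxg := hx.continuousAt_comp (WeakDual.eval_continuous g).continuousAt
  rw [hφ] at hxg
  rw [real_inner_comm, InnerProductSpace.toDual_symm_apply]
  exact hxg

section WeakClusterPoint

variable {α : Type*} [MeasurableSpace α] {ν : Measure α} [IsFiniteMeasure ν]
  {f : ℕ → α → ℝ} (hf : ∀ n, MemLp (f n) 2 ν) {u : Lp ℝ 2 ν}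
  (hu : ∀ g : Lp ℝ 2 ν, MapClusterPt ⟪g, u⟫ atTop (fun n => ⟪g, (hf n).toLp (f n)⟫))
include hu

theorem mapClusterPt_setIntegral_sub {s t : Set α} (hs : MeasurableSet s)
    (ht : MeasurableSet t) :
    MapClusterPt (∫ x in s, u x ∂ν - ∫ x in t, u x ∂ν) atTop
      (fun n => ∫ x in s, f n x ∂ν - ∫ x in t, f n x ∂ν) := by
  have hint : ∀ n {r : Set α}, ∫ x in r, (hf n).toLp (f n) x ∂ν = ∫ x in r, f n x ∂ν :=
    fun n => integral_congr_ae (ae_restrict_of_ae (hf n).coeFn_toLp)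
  have h := hu (indicatorConstLp 2 hs (measure_ne_top ν s) 1
    - indicatorConstLp 2 ht (measure_ne_top ν t) 1)
  simpa only [inner_sub_left, L2.inner_indicatorConstLp_one, hint] using h

theorem mapClusterPt_setIntegral {s : Set α} (hs : MeasurableSet s) :
    MapClusterPt (∫ x in s, u x ∂ν) atTop (fun n => ∫ x in s, f n x ∂ν) := by
  simpa using mapClusterPt_setIntegral_sub hf hu hs MeasurableSet.empty

theorem setIntegral_eq_of_tendsto {s : Set α} (hs : MeasurableSet s) {L : ℝ}
    (hL : Tendsto (fun n => ∫ x in s, f n x ∂ν) atTop (𝓝 L)) : ∫ x in s, u x ∂ν = L :=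
  (mapClusterPt_setIntegral hf hu hs).eq_of_tendsto hL

theorem ae_mem_Icc_of_mapClusterPt {a b : ℝ} (hab : ∀ n, ∀ᵐ x ∂ν, f n x ∈ Set.Icc a b) :
    ∀ᵐ x ∂ν, u x ∈ Set.Icc a b := by
  have hu_int : Integrable u ν := (Lp.memLp u).integrable one_le_two
  have hset : ∀ s, MeasurableSet s →
      ∫ x in s, u x ∂ν ∈ Set.Icc (∫ _ in s, a ∂ν) (∫ _ in s, b ∂ν) := fun s hs =>
    isClosed_Icc.mem_of_mapClusterPt (mapClusterPt_setIntegral hf hu hs) <|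
      Eventually.of_forall fun n =>
        have hfi := ((hf n).integrable one_le_two).integrableOn
        ⟨setIntegral_mono_ae (integrable_const a).integrableOn hfi
            ((hab n).mono fun _ hx => hx.1),
          setIntegral_mono_ae hfi (integrable_const b).integrableOn
            ((hab n).mono fun _ hx => hx.2)⟩
  have hlo := ae_le_of_forall_setIntegral_le (integrable_const a) hu_int
    fun s hs _ => (hset s hs).1
  have hhi := ae_le_of_forall_setIntegral_le hu_int (integrable_const b)
    fun s hs _ => (hset s hs).2
  filter_upwards [hlo, hhi] with x h₁ h₂ using ⟨h₁, h₂⟩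

end WeakClusterPoint

theorem ae_eq_swap_of_mapClusterPt {β : Type*} [MeasurableSpace β] {μ : Measure β}
    [IsFiniteMeasure μ] {f : ℕ → β × β → ℝ} (hf : ∀ n, MemLp (f n) 2 (μ.prod μ))
    {u : Lp ℝ 2 (μ.prod μ)}
    (hu : ∀ g, MapClusterPt ⟪g, u⟫ atTop (fun n => ⟪g, (hf n).toLp (f n)⟫))
    (hsymm : ∀ n, ∀ᵐ p ∂(μ.prod μ), f n p = f n p.swap) :
    ∀ᵐ p ∂(μ.prod μ), u p = u p.swap := by
  have hswap : MeasurePreserving Prod.swap (μ.prod μ) (μ.prod μ) :=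
    Measure.measurePreserving_swap
  have hemb : MeasurableEmbedding (Prod.swap : β × β → β × β) :=
    MeasurableEquiv.prodComm.measurableEmbedding
  have hu_int : Integrable u (μ.prod μ) := (Lp.memLp u).integrable one_le_two
  have hpre : ∀ (g : β × β → ℝ) s,
      ∫ p in Prod.swap ⁻¹' s, g p ∂(μ.prod μ) = ∫ p in s, g p.swap ∂(μ.prod μ) := fun g s => by
    simpa using hswap.setIntegral_preimage_emb hemb (g ∘ Prod.swap) s
  refine ae_eq_of_forall_setIntegral_eq_of_sigmaFinite (fun _ _ _ => hu_int.integrableOn)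
    (fun _ _ _ => ((hswap.integrable_comp_emb hemb).mpr hu_int).integrableOn) fun s hs _ => ?_
  have hzero : ∀ n, ∫ p in s, f n p ∂(μ.prod μ) - ∫ p in Prod.swap ⁻¹' s, f n p ∂(μ.prod μ) = 0 :=
    fun n => by
      rw [hpre, sub_eq_zero]
      exact integral_congr_ae (ae_restrict_of_ae (hsymm n))
  have h := (mapClusterPt_setIntegral_sub hf hu hs (measurable_swap hs)).eq_of_tendsto
    (tendsto_const_nhds.congr fun n => (hzero n).symm)
  rw [hpre, sub_eq_zero] at h
  exact h

section CutDistance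

variable {Ω : Type*} [MeasurableSpace Ω] {μ : Measure Ω} {U V : Ω × Ω → ℝ}

theorem bddAbove_abs_setIntegral_prod_sub (hU : Integrable U (μ.prod μ))
    (hV : Integrable V (μ.prod μ)) :
    BddAbove {r : ℝ | ∃ A B : Set Ω, MeasurableSet A ∧ MeasurableSet B ∧
      r = |∫ p in A ×ˢ B, (U p - V p) ∂(μ.prod μ)|} := by
  refine ⟨∫ p, |U p - V p| ∂(μ.prod μ), ?_⟩
  rintro r ⟨A, B, -, -, rfl⟩
  calc |∫ p in A ×ˢ B, (U p - V p) ∂(μ.prod μ)|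
      ≤ ∫ p in A ×ˢ B, |U p - V p| ∂(μ.prod μ) := abs_integral_le_integral_abs
    _ ≤ ∫ p, |U p - V p| ∂(μ.prod μ) :=
      setIntegral_le_integral (hU.sub hV).abs (Eventually.of_forall fun _ => abs_nonneg _)

theorem abs_setIntegral_prod_sub_le_cutDist (hU : Integrable U (μ.prod μ))
    (hV : Integrable V (μ.prod μ)) {A B : Set Ω} (hA : MeasurableSet A) (hB : MeasurableSet B) :
    |∫ p in A ×ˢ B, (U p - V p) ∂(μ.prod μ)| ≤ cutDist μ U V :=
  le_csSup (bddAbove_abs_setIntegral_prod_sub hU hV) ⟨A, B, hA, hB, rfl⟩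

theorem cutDist_nonneg (hU : Integrable U (μ.prod μ)) (hV : Integrable V (μ.prod μ)) :
    0 ≤ cutDist μ U V :=
  (abs_nonneg _).trans (abs_setIntegral_prod_sub_le_cutDist hU hV .empty .empty)

theorem cutDist_le {ε : ℝ} (hε : 0 ≤ ε)
    (h : ∀ A B : Set Ω, MeasurableSet A → MeasurableSet B →
      |∫ p in A ×ˢ B, (U p - V p) ∂(μ.prod μ)| ≤ ε) :
    cutDist μ U V ≤ ε :=
  Real.sSup_le (by rintro r ⟨A, B, hA, hB, rfl⟩; exact h A B hA hB) hε

variable {W : ℕ → Ω × Ω → ℝ} (hW : ∀ n, Integrable (W n) (μ.prod μ))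
  (hCauchy : ∀ ε > (0:ℝ), ∃ N : ℕ, ∀ m ≥ N, ∀ n ≥ N, cutDist μ (W m) (W n) < ε)
include hW hCauchy

theorem cauchySeq_setIntegral_prod {A B : Set Ω} (hA : MeasurableSet A) (hB : MeasurableSet B) :
    CauchySeq fun n => ∫ p in A ×ˢ B, W n p ∂(μ.prod μ) := by
  refine Metric.cauchySeq_iff.mpr fun ε hε => ?_
  obtain ⟨N, hN⟩ := hCauchy ε hε
  refine ⟨N, fun m hm n hn => ?_⟩
  rw [Real.dist_eq, ← integral_sub (hW m).integrableOn (hW n).integrableOn]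
  exact (abs_setIntegral_prod_sub_le_cutDist (hW m) (hW n) hA hB).trans_lt (hN m hm n hn)

theorem tendsto_cutDist_of_tendsto_setIntegral_prod (hU : Integrable U (μ.prod μ))
    (hlim : ∀ A B : Set Ω, MeasurableSet A → MeasurableSet B →
      Tendsto (fun n => ∫ p in A ×ˢ B, W n p ∂(μ.prod μ)) atTop
        (𝓝 (∫ p in A ×ˢ B, U p ∂(μ.prod μ)))) :
    Tendsto (fun n => cutDist μ (W n) U) atTop (𝓝 0) := by
  refine Metric.tendsto_atTop.mpr fun ε hε => ?_
  obtain ⟨N, hN⟩ := hCauchy (ε / 2) (half_pos hε)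
  refine ⟨N, fun n hn => ?_⟩
  have hle : cutDist μ (W n) U ≤ ε / 2 := by
    refine cutDist_le (half_pos hε).le fun A B hA hB => ?_
    rw [integral_sub (hW n).integrableOn hU.integrableOn]
    refine le_of_tendsto ((tendsto_const_nhds.sub (hlim A B hA hB)).abs)
      (eventually_atTop.mpr ⟨N, fun m hm => ?_⟩)
    rw [← integral_sub (hW n).integrableOn (hW m).integrableOn]
    exact (abs_setIntegral_prod_sub_le_cutDist (hW n) (hW m) hA hB).trans (hN n hn m hm).le
  rw [Real.dist_eq, sub_zero, abs_of_nonneg (cutDist_nonneg (hW n) hU)]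
  linarith

end CutDistance

namespace IsGraphon

variable {Ω : Type*} [MeasurableSpace Ω] {μ : Measure Ω} {W : Ω × Ω → ℝ}

theorem ae_norm_le_one (hW : IsGraphon μ W) : ∀ᵐ p ∂(μ.prod μ), ‖W p‖ ≤ 1 :=
  hW.2.1.mono fun _ hp => abs_le.mpr ⟨by linarith [hp.1], hp.2⟩

theorem memLp [IsFiniteMeasure μ] (hW : IsGraphon μ W) (p : ℝ≥0∞) : MemLp W p (μ.prod μ) :=
  MemLp.of_bound hW.1.aestronglyMeasurable 1 hW.ae_norm_le_one

theorem integrable [IsFiniteMeasure μ] (hW : IsGraphon μ W) : Integrable W (μ.prod μ) :=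
  memLp_one_iff_integrable.mp (hW.memLp 1)

theorem norm_toLp_le_one [IsProbabilityMeasure μ] (hW : IsGraphon μ W) :
    ‖(hW.memLp 2).toLp W‖ ≤ 1 := by
  have h := Lp.norm_le_of_ae_bound zero_le_one <|
    (hW.memLp 2).coeFn_toLp.mp (hW.ae_norm_le_one.mono fun _ h hp => hp ▸ h)
  rwa [ENNReal.coe_eq_one.mp ((coe_measureUnivNNReal _).trans measure_univ), NNReal.coe_one,
    Real.one_rpow, one_mul] at h

end IsGraphon

theorem graphons_complete_cutNorm_general {Ω : Type*} [MeasurableSpace Ω]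
    (μ : Measure Ω) [IsProbabilityMeasure μ]
    (W : ℕ → Ω × Ω → ℝ) (hW : ∀ n, IsGraphon μ (W n))
    (hCauchy : ∀ ε > (0:ℝ), ∃ N : ℕ, ∀ m ≥ N, ∀ n ≥ N, cutDist μ (W m) (W n) < ε) :
    ∃ U : Ω × Ω → ℝ, IsGraphon μ U ∧
      Tendsto (fun n => cutDist μ (W n) U) atTop (nhds 0) := by
  have hmem : ∀ n, MemLp (W n) 2 (μ.prod μ) := fun n => (hW n).memLp 2
  have hint : ∀ n, Integrable (W n) (μ.prod μ) := fun n => (hW n).integrable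
  obtain ⟨u, hu⟩ := exists_forall_mapClusterPt_inner fun n => (hW n).norm_toLp_le_one
  have hu_graphon : IsGraphon μ u :=
    ⟨(Lp.stronglyMeasurable u).measurable,
      ae_mem_Icc_of_mapClusterPt hmem hu fun n => (hW n).2.1,
      ae_eq_swap_of_mapClusterPt hmem hu fun n => (hW n).2.2⟩
  have hlim : ∀ A B : Set Ω, MeasurableSet A → MeasurableSet B →
      Tendsto (fun n => ∫ p in A ×ˢ B, W n p ∂(μ.prod μ)) atTop
        (𝓝 (∫ p in A ×ˢ B, u p ∂(μ.prod μ))) := fun A B hA hB => by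
    have h := (cauchySeq_setIntegral_prod hint hCauchy hA hB).tendsto_limUnder
    rwa [← setIntegral_eq_of_tendsto hmem hu (hA.prod hB) h] at h
  exact ⟨u, hu_graphon,
    tendsto_cutDist_of_tendsto_setIntegral_prod hint hCauchy hu_graphon.integrable hlim⟩

/-- The space of graphons with the cut norm distance is complete: every Cauchy
sequence of graphons converges in cut norm distance to a graphon. -/
theorem graphons_complete_cutNorm {Ω : Type*} [MeasurableSpace Ω]
    [MeasurableSpace.CountablyGenerated Ω]
    (μ : Measure Ω) [IsProbabilityMeasure μ] [NullSingletonClass μ]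
    (W : ℕ → Ω × Ω → ℝ) (hW : ∀ n, IsGraphon μ (W n))
    (hCauchy : ∀ ε > (0:ℝ), ∃ N : ℕ, ∀ m ≥ N, ∀ n ≥ N, cutDist μ (W m) (W n) < ε) :
    ∃ U : Ω × Ω → ℝ, IsGraphon μ U ∧
      Tendsto (fun n => cutDist μ (W n) U) atTop (nhds 0) :=
  graphons_complete_cutNorm_general μ W hW hCauchy
end

section
/- Let (Ω, π) be a probability space and let U, U₁, U₂, … be bounded symmetric measurable kernels on Ω² with ‖U_n − U‖_□ → 0. Suppose A ⊆ Ω has positive measure and is a twin-set for each U_n, i.e. there is a conull A'_n ⊆ A such that for all x, x' ∈ A'_n the functions U_n(x,·) and U_n(x',·) agree a.e. Then A is a twin-set for U. -/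
/-!
Write `F_T^W(x) = ∫_T W(x, y) dy`. If `A` is a twin-set of `W`, then `F_T^W` is a.e. constant on
`A` for every `T`; for an integrable function on `A` this is equivalent to
`μ(A) ∫_S F = μ(S) ∫_A F` for all measurable `S ⊆ A`, which for `F = F_T^W` is an identity
between rectangle integrals of `W`. Cut-norm convergence makes rectangle integrals converge, so the
identity, and with it the a.e. constancy of every `F_T^U` on `A`, passes to the limit kernel.
Letting `T` run through a countable generating π-system together with `univ` and discarding
countably many null sets leaves a conull `A' ⊆ A` on which all sections `U(x, ·)` have the same
integrals over the π-system, hence agree a.e.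
-/

open MeasureTheory Filter

/-- The cut norm of a kernel. -/
noncomputable def cutNorm {Ω : Type*} [MeasurableSpace Ω] (μ : Measure Ω)
    (W : Ω × Ω → ℝ) : ℝ :=
  sSup {r : ℝ | ∃ S T : Set Ω, MeasurableSet S ∧ MeasurableSet T ∧
    r = |∫ p in S ×ˢ T, W p ∂(μ.prod μ)|}

/-- `A` is a twin-set of a kernel `W`: there is a conull subset `A' ⊆ A` such
that all sections `W(x, ·)` with `x ∈ A'` agree a.e. -/
def IsTwinSet {Ω : Type*} [MeasurableSpace Ω] (μ : Measure Ω)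
    (W : Ω × Ω → ℝ) (A : Set Ω) : Prop :=
  ∃ A' ⊆ A, μ (A \ A') = 0 ∧
    ∀ x ∈ A', ∀ x' ∈ A', ∀ᵐ y ∂μ, W (x, y) = W (x', y)

open Set Topology

lemma Set.Countable.generatePiSystem {α : Type*} {S : Set (Set α)} (hS : S.Countable) :
    (_root_.generatePiSystem S).Countable := by
  have h : _root_.generatePiSystem S ⊆ sInter '' {t : Set (Set α) | t.Finite ∧ t ⊆ S} := by
    intro s hs
    induction hs with
    | base h => exact ⟨{_}, ⟨finite_singleton _, singleton_subset_iff.2 h⟩, sInter_singleton _⟩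
    | inter _ _ _ ihs iht =>
      obtain ⟨t₁, ⟨ht₁, ht₁S⟩, rfl⟩ := ihs
      obtain ⟨t₂, ⟨ht₂, ht₂S⟩, rfl⟩ := iht
      exact ⟨t₁ ∪ t₂, ⟨ht₁.union ht₂, union_subset ht₁S ht₂S⟩, sInter_union _ _⟩
  exact ((countable_ofPred_finite_subset hS).image _).mono h

lemma MeasurableSpace.exists_countable_isPiSystem_generateFrom_eq (α : Type*)
    [m : MeasurableSpace α] [CountablyGenerated α] :
    ∃ p : Set (Set α), p.Countable ∧ IsPiSystem p ∧ m = generateFrom p :=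
  ⟨generatePiSystem (countableGeneratingSet α),
    countable_countableGeneratingSet.generatePiSystem, isPiSystem_generatePiSystem _,
    by rw [generateFrom_generatePiSystem_eq, generateFrom_countableGeneratingSet]⟩

namespace MeasureTheory

variable {α E : Type*} [NormedAddCommGroup E] [NormedSpace ℝ E] [CompleteSpace E]

lemma ae_eq_of_forall_setIntegral_eq_of_isPiSystem [m : MeasurableSpace α] {μ : Measure α}
    {f g : α → E} (hf : Integrable f μ) (hg : Integrable g μ) {p : Set (Set α)}
    (h_eq : m = MeasurableSpace.generateFrom p) (h_inter : IsPiSystem p)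
    (h_univ : ∫ x, f x ∂μ = ∫ x, g x ∂μ) (basic : ∀ s ∈ p, ∫ x in s, f x ∂μ = ∫ x in s, g x ∂μ) :
    f =ᵐ[μ] g := by
  refine hf.ae_eq_of_forall_setIntegral_eq f g hg fun s hs _ => ?_
  refine MeasurableSpace.induction_on_inter h_eq h_inter (by simp) basic (fun t ht ih => ?_)
    (fun t htd htm ih => ?_) s hs
  · rw [← add_right_inj (∫ x in t, f x ∂μ), integral_add_compl ht hf, ih,
      integral_add_compl ht hg, h_univ]
  · rw [integral_iUnion htm htd hf.integrableOn, integral_iUnion htm htd hg.integrableOn]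
    exact tsum_congr ih

end MeasureTheory

section

variable {Ω : Type*} [MeasurableSpace Ω] {μ : Measure Ω}

lemma integrable_of_abs_le [IsFiniteMeasure μ] {f : Ω → ℝ} (hf : Measurable f) {M : ℝ}
    (hM : ∀ x, |f x| ≤ M) : Integrable f μ :=
  .of_bound hf.aestronglyMeasurable M (.of_forall hM)

lemma measureReal_mul_setIntegral_eq_of_ae_restrict_eq_const {A S : Set Ω} {F : Ω → ℝ} {c : ℝ}
    (hF : ∀ᵐ x ∂μ.restrict A, F x = c) (hSA : S ⊆ A) :
    μ.real A * ∫ x in S, F x ∂μ = μ.real S * ∫ x in A, F x ∂μ := by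
  rw [integral_congr_ae (ae_restrict_of_ae_restrict_of_subset hSA hF), integral_congr_ae hF,
    setIntegral_const, setIntegral_const, smul_eq_mul, smul_eq_mul]
  ring

lemma ae_restrict_eq_setAverage_of_measureReal_mul_setIntegral_eq [IsFiniteMeasure μ]
    {A : Set Ω} (hA : MeasurableSet A) {F : Ω → ℝ} (hF : IntegrableOn F A μ)
    (h : ∀ S ⊆ A, MeasurableSet S → μ.real A * ∫ x in S, F x ∂μ = μ.real S * ∫ x in A, F x ∂μ) :
    ∀ᵐ x ∂μ.restrict A, F x = ⨍ x in A, F x ∂μ := by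
  rcases eq_or_ne (μ A) 0 with hA0 | hA0
  · simp [Measure.restrict_eq_zero.2 hA0]
  have hAreal : μ.real A ≠ 0 := (measureReal_ne_zero_iff (measure_ne_top μ A)).2 hA0
  refine hF.ae_eq_of_forall_setIntegral_eq _ _ (integrable_const _) fun S hS _ => ?_
  rw [Measure.restrict_restrict hS, setIntegral_const, setAverage_eq, smul_eq_mul, smul_eq_mul,
    mul_left_comm, ← h _ inter_subset_right (hS.inter hA), inv_mul_cancel_left₀ hAreal]

lemma abs_setIntegral_prod_le_cutNorm [SFinite μ] {W : Ω × Ω → ℝ}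
    (hW : Integrable W (μ.prod μ)) {S T : Set Ω} (hS : MeasurableSet S) (hT : MeasurableSet T) :
    |∫ p in S ×ˢ T, W p ∂μ.prod μ| ≤ cutNorm μ W := by
  refine le_csSup ⟨∫ p, |W p| ∂μ.prod μ, ?_⟩ ⟨S, T, hS, hT, rfl⟩
  rintro _ ⟨S', T', -, -, rfl⟩
  exact (abs_integral_le_integral_abs).trans
    (setIntegral_le_integral hW.abs (.of_forall fun _ => abs_nonneg _))

lemma tendsto_setIntegral_prod_of_tendsto_cutNorm [SFinite μ] {ι : Type*} {l : Filter ι}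
    {Wn : ι → Ω × Ω → ℝ} {W : Ω × Ω → ℝ} (hWn : ∀ n, Integrable (Wn n) (μ.prod μ))
    (hW : Integrable W (μ.prod μ))
    (h : Tendsto (fun n => cutNorm μ (fun p => Wn n p - W p)) l (𝓝 0))
    {S T : Set Ω} (hS : MeasurableSet S) (hT : MeasurableSet T) :
    Tendsto (fun n => ∫ p in S ×ˢ T, Wn n p ∂μ.prod μ) l (𝓝 (∫ p in S ×ˢ T, W p ∂μ.prod μ)) := by
  refine tendsto_iff_norm_sub_tendsto_zero.2 (squeeze_zero (fun _ => norm_nonneg _) (fun n => ?_) h)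
  rw [← integral_sub (hWn n).integrableOn hW.integrableOn]
  exact abs_setIntegral_prod_le_cutNorm ((hWn n).sub hW) hS hT

namespace IsTwinSet

variable {W : Ω × Ω → ℝ} {A : Set Ω}

lemma exists_ae_restrict_ae_eq (h : IsTwinSet μ W A) (hA : MeasurableSet A) :
    ∃ w : Ω → ℝ, ∀ᵐ x ∂μ.restrict A, ∀ᵐ y ∂μ, W (x, y) = w y := by
  obtain ⟨A', hA'A, hA'null, hA'⟩ := h
  rcases A'.eq_empty_or_nonempty with rfl | ⟨x₀, hx₀⟩
  · rw [sdiff_empty] at hA'null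
    simp [Measure.restrict_eq_zero.2 hA'null]
  refine ⟨fun y => W (x₀, y), ?_⟩
  have hmem : ∀ᵐ x ∂μ.restrict A, x ∈ A' :=
    (ae_restrict_iff' hA).2 (ae_iff.2 (measure_mono_null (fun _ => Classical.not_imp.1) hA'null))
  filter_upwards [hmem] with x hx using hA' x hx x₀ hx₀

lemma measureReal_mul_setIntegral_prod_eq [SFinite μ] (h : IsTwinSet μ W A) (hA : MeasurableSet A)
    (hW : Integrable W (μ.prod μ)) {S : Set Ω} (hSA : S ⊆ A) (T : Set Ω) :
    μ.real A * ∫ p in S ×ˢ T, W p ∂μ.prod μ = μ.real S * ∫ p in A ×ˢ T, W p ∂μ.prod μ := by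
  obtain ⟨w, hw⟩ := h.exists_ae_restrict_ae_eq hA
  rw [setIntegral_prod _ hW.integrableOn, setIntegral_prod _ hW.integrableOn]
  refine measureReal_mul_setIntegral_eq_of_ae_restrict_eq_const (c := ∫ y in T, w y ∂μ) ?_ hSA
  filter_upwards [hw] with x hx using integral_congr_ae (ae_restrict_of_ae hx)

end IsTwinSet

lemma isTwinSet_of_ae_restrict_setIntegral_eq [MeasurableSpace.CountablyGenerated Ω]
    {W : Ω × Ω → ℝ} (hW : ∀ x, Integrable (fun y => W (x, y)) μ) {A : Set Ω}
    (hA : MeasurableSet A) (c : Set Ω → ℝ)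
    (h : ∀ T, MeasurableSet T → ∀ᵐ x ∂μ.restrict A, ∫ y in T, W (x, y) ∂μ = c T) :
    IsTwinSet μ W A := by
  obtain ⟨p, hpc, hp, hgen⟩ := MeasurableSpace.exists_countable_isPiSystem_generateFrom_eq Ω
  have hgood : ∀ᵐ x ∂μ, x ∈ A → ∀ T ∈ insert univ p, ∫ y in T, W (x, y) ∂μ = c T := by
    rw [← ae_restrict_iff' hA, ae_ball_iff (hpc.insert univ)]
    rintro T (rfl | hT)
    · exact h univ .univ
    · exact h T (hgen ▸ MeasurableSpace.measurableSet_generateFrom hT)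
  refine ⟨{x ∈ A | ∀ T ∈ insert univ p, ∫ y in T, W (x, y) ∂μ = c T}, sep_subset _ _,
    measure_mono_null ?_ (ae_iff.1 hgood), ?_⟩
  · exact fun x hx hP => hx.2 ⟨hx.1, hP hx.1⟩
  rintro x ⟨-, hx⟩ x' ⟨-, hx'⟩
  refine ae_eq_of_forall_setIntegral_eq_of_isPiSystem (hW x) (hW x') hgen hp ?_ fun T hT => ?_
  · simpa using (hx univ (mem_insert _ _)).trans (hx' univ (mem_insert _ _)).symm
  · exact (hx T (mem_insert_of_mem _ hT)).trans (hx' T (mem_insert_of_mem _ hT)).symm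

end

theorem isTwinSet_of_cutNorm_tendsto_general {Ω : Type*} [MeasurableSpace Ω]
    [MeasurableSpace.CountablyGenerated Ω]
    (μ : Measure Ω) [IsProbabilityMeasure μ]
    (U : Ω × Ω → ℝ) (Un : ℕ → Ω × Ω → ℝ)
    (hUmeas : Measurable U) (hUnmeas : ∀ n, Measurable (Un n))
    (hUbdd : ∃ M : ℝ, ∀ p, |U p| ≤ M) (hUnbdd : ∀ n, ∃ M : ℝ, ∀ p, |Un n p| ≤ M)
    (hconv : Tendsto (fun n => cutNorm μ (fun p => Un n p - U p)) atTop (nhds 0))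
    (A : Set Ω) (hA : MeasurableSet A)
    (htwin : ∀ n, IsTwinSet μ (Un n) A) :
    IsTwinSet μ U A := by
  obtain ⟨M, hM⟩ := hUbdd
  have hUint : Integrable U (μ.prod μ) := integrable_of_abs_le hUmeas hM
  have hUnint : ∀ n, Integrable (Un n) (μ.prod μ) := fun n =>
    (hUnbdd n).elim fun _ => integrable_of_abs_le (hUnmeas n)
  refine isTwinSet_of_ae_restrict_setIntegral_eq
    (fun x => integrable_of_abs_le (hUmeas.comp measurable_prodMk_left) fun _ => hM _) hA
    (fun T => ⨍ x in A, ∫ y in T, U (x, y) ∂μ ∂μ) fun T hT => ?_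
  have hsec : IntegrableOn (fun x => ∫ y in T, U (x, y) ∂μ) A μ := by
    have hAT : Integrable U ((μ.restrict A).prod (μ.restrict T)) := by
      rw [Measure.prod_restrict]
      exact hUint.integrableOn
    exact hAT.integral_prod_left
  refine ae_restrict_eq_setAverage_of_measureReal_mul_setIntegral_eq hA hsec fun S hSA hS => ?_
  have hlim : ∀ S, MeasurableSet S → Tendsto (fun n => ∫ p in S ×ˢ T, Un n p ∂μ.prod μ) atTop
      (𝓝 (∫ p in S ×ˢ T, U p ∂μ.prod μ)) := fun S hS =>
    tendsto_setIntegral_prod_of_tendsto_cutNorm hUnint hUint hconv hS hT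
  have hU : μ.real A * ∫ p in S ×ˢ T, U p ∂μ.prod μ = μ.real S * ∫ p in A ×ˢ T, U p ∂μ.prod μ :=
    tendsto_nhds_unique (((hlim S hS).const_mul _).congr fun n =>
      (htwin n).measureReal_mul_setIntegral_prod_eq hA (hUnint n) hSA T) ((hlim A hA).const_mul _)
  rwa [setIntegral_prod _ hUint.integrableOn, setIntegral_prod _ hUint.integrableOn] at hU

/-- A positive-measure set that is a twin-set of every kernel in a sequence
converging in cut norm is a twin-set of the limit kernel. -/
theorem isTwinSet_of_cutNorm_tendsto {Ω : Type*} [MeasurableSpace Ω]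
    [MeasurableSpace.CountablyGenerated Ω]
    (μ : Measure Ω) [IsProbabilityMeasure μ]
    (U : Ω × Ω → ℝ) (Un : ℕ → Ω × Ω → ℝ)
    (hUmeas : Measurable U) (hUnmeas : ∀ n, Measurable (Un n))
    (hUbdd : ∃ M : ℝ, ∀ p, |U p| ≤ M) (hUnbdd : ∀ n, ∃ M : ℝ, ∀ p, |Un n p| ≤ M)
    (hUsym : ∀ᵐ p ∂(μ.prod μ), U p = U p.swap)
    (hUnsym : ∀ n, ∀ᵐ p ∂(μ.prod μ), Un n p = Un n p.swap)
    (hconv : Tendsto (fun n => cutNorm μ (fun p => Un n p - U p)) atTop (nhds 0))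
    (A : Set Ω) (hA : MeasurableSet A) (hApos : 0 < μ A)
    (htwin : ∀ n, IsTwinSet μ (Un n) A) :
    IsTwinSet μ U A :=
  isTwinSet_of_cutNorm_tendsto_general μ U Un hUmeas hUnmeas hUbdd hUnbdd hconv A hA htwin
end
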